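/- arXiv:2511.02542 — 2 statements merged into one kernel-verified Lean document; each statement's English description precedes it below -/
import Mathlib

section
/- If every vector of F_2^r (including zero) is a sum of at least ℓ and at most R columns of a parity check matrix of an [n,n-r]_2 code C taken from distinct parts of a partition, then the spherical (R,ℓ)-capsules centered at the codewords of C cover F_2^n. -/
/-!
Given `v`, write its syndrome `H v` as the sum of the columns indexed by a set `T` with
`ℓ ≤ |T| ≤ R`. Flipping `v` in the positions of `T` gives a vector `c` with `H c = H v - H v = 0`,
i.e. a codeword, at Hamming distance exactly `|T|` from `v`.
-/

open Finset Matrix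

section

variable {ι : Type*} [Fintype ι]

theorem hammingDist_sub_right_self {G : Type*} [AddGroup G] [DecidableEq G] (v x : ι → G) :
    hammingDist v (v - x) = hammingNorm x := by
  rw [hammingDist_comm, hammingDist_eq_hammingNorm, neg_sub, sub_add_cancel]

variable [DecidableEq ι]

theorem hammingNorm_sum_single {M : Type*} [AddCommMonoid M] [DecidableEq M] {a : M} (ha : a ≠ 0)
    (T : Finset ι) : hammingNorm (∑ j ∈ T, Pi.single j a) = #T := by
  simp [hammingNorm, ha]

theorem exists_mulVec_eq_zero_hammingDist_eq_card {m R : Type*} [Ring R] [DecidableEq R]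
    [Nontrivial R] (H : Matrix m ι R) (v : ι → R) (T : Finset ι)
    (hT : H *ᵥ v = ∑ j ∈ T, H.col j) : ∃ c, H *ᵥ c = 0 ∧ hammingDist v c = #T :=
  ⟨v - ∑ j ∈ T, Pi.single j 1,
    by rw [mulVec_sub, mulVec_sum, hT]; simp only [mulVec_single_one, sub_self],
    by rw [hammingDist_sub_right_self, hammingNorm_sum_single one_ne_zero]⟩

end

/-- If every vector of F_2^r is a sum of at least ℓ and at most R
columns of a parity check matrix H of a code C, then the spherical
(R,ℓ)-capsules centered at codewords of C cover F_2^n. -/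
theorem capsules_cover
    (n r R ℓ : ℕ) (H : Matrix (Fin r) (Fin n) (ZMod 2))
    (hpart : ∀ s : Fin r → ZMod 2, ∃ T : Finset (Fin n),
        ℓ ≤ T.card ∧ T.card ≤ R ∧ s = ∑ j ∈ T, (fun i => H i j)) :
    ∀ v : Fin n → ZMod 2, ∃ c : Fin n → ZMod 2,
      H.mulVec c = 0 ∧ ℓ ≤ hammingDist v c ∧ hammingDist v c ≤ R := by
  intro v
  obtain ⟨T, hℓ, hR, hT⟩ := hpart (H *ᵥ v)
  obtain ⟨c, hc, hdist⟩ := exists_mulVec_eq_zero_hammingDist_eq_card H v T hT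
  exact ⟨c, hc, hdist ▸ hℓ, hdist ▸ hR⟩
end

section
/- Suppose H_0 is an r_0×n_0 binary matrix such that every vector of F_2^{r_0} is a sum of at most 2 columns of H_0, with a partition of its columns into p subsets realizing a 2-partition, and let m satisfy 2^m ≥ p. Then the q^m-concatenating Construction QM_2^2 with indicator set B = F_{2^m} and D = D_1(2) produces a binary matrix H_C with r_0 + 2m rows and 2^m(n_0+1) − 1 columns such that every vector of F_2^{r_0+2m} is a sum of at most 2 columns of H_C. -/
/-!
A 2-partition reduces every syndrome `s` to `0`, a single column `h j`, or `h i + h j` with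
`β i ≠ β j`. In the last case the columns `(h i, ξ, β i ξ)` and `(h j, x - ξ, β j (x - ξ))`
reach `(s, x, y)`, since the system `ξ + ξ' = x`, `β i ξ + β j ξ' = y` has determinant
`β i - β j ≠ 0`. A single column is corrected in the last coordinate by a column of `D`, and
`s = 0` is reached by two columns over the same `h j`, where `β j = y / x` by surjectivity.
-/

open Finset

def IsSumOfAtMost {ι M : Type*} [AddCommMonoid M] (k : ℕ) (f : ι → M) (u : M) : Prop :=
  ∃ T : Finset ι, T.card ≤ k ∧ u = ∑ i ∈ T, f i

namespace IsSumOfAtMost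

variable {ι M : Type*} [AddCommMonoid M] {k : ℕ} {f : ι → M}

lemma zero : IsSumOfAtMost k f 0 := ⟨∅, by simp, by simp⟩

lemma apply (hk : 1 ≤ k) (i : ι) : IsSumOfAtMost k f (f i) := ⟨{i}, by simpa, by simp⟩

lemma add (hk : 2 ≤ k) {i j : ι} (hij : i ≠ j) : IsSumOfAtMost k f (f i + f j) := by
  classical
  exact ⟨{i, j}, card_le_two.trans hk, (sum_pair hij).symm⟩

end IsSumOfAtMost

section QM

variable {ι V K : Type*} [AddCommGroup V] [Field K] (h : ι → V) (β : ι → K)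

/-- The columns of `H_C`: `Sum.inl (j, ξ)` is the column `(h j, ξ, β j * ξ)` of `A(h j, β j)`
and `Sum.inr w` the column `(0, 0, w)` of `D`. -/
def qmColumn : (ι × K) ⊕ {w : K // w ≠ 0} → V × K × K :=
  Sum.elim (fun jξ => (h jξ.1, jξ.2, β jξ.1 * jξ.2)) (fun w => (0, 0, w))

lemma card_qmIndex [Fintype ι] [Fintype K] [DecidableEq K] :
    Fintype.card ((ι × K) ⊕ {w : K // w ≠ 0}) = Fintype.card K * (Fintype.card ι + 1) - 1 := by
  have hK : 1 ≤ Fintype.card K := Fintype.card_pos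
  rw [Fintype.card_sum, Fintype.card_prod, Fintype.card_subtype_compl, Fintype.card_subtype_eq,
    mul_add, mul_one, mul_comm, Nat.add_sub_assoc hK]

lemma qmColumn_isSumOfAtMost_add {i j : ι} (hβij : β i ≠ β j) (x y : K) :
    IsSumOfAtMost 2 (qmColumn h β) (h i + h j, x, y) := by
  have hij : i ≠ j := fun hij => hβij (congrArg β hij)
  have hdet : β i - β j ≠ 0 := sub_ne_zero.mpr hβij
  set ξ := (y - β j * x) / (β i - β j)
  have hξ : (β i - β j) * ξ = y - β j * x := mul_div_cancel₀ _ hdet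
  convert IsSumOfAtMost.add (f := qmColumn h β) le_rfl
    (i := .inl (i, ξ)) (j := .inl (j, x - ξ)) (by simp [hij]) using 1
  simp only [qmColumn, Sum.elim_inl, Prod.mk_add_mk, add_sub_cancel, Prod.mk.injEq, true_and]
  linear_combination -hξ

lemma qmColumn_isSumOfAtMost_column (j : ι) (x y : K) :
    IsSumOfAtMost 2 (qmColumn h β) (h j, x, y) := by
  by_cases hy : y = β j * x
  · subst hy
    exact IsSumOfAtMost.apply (f := qmColumn h β) one_le_two (.inl (j, x))
  · convert IsSumOfAtMost.add (f := qmColumn h β) le_rfl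
      (i := .inl (j, x)) (j := .inr ⟨y - β j * x, sub_ne_zero.mpr hy⟩) (by simp) using 1
    simp [qmColumn]

lemma qmColumn_isSumOfAtMost_zero [Module (ZMod 2) V] (hβ : Function.Surjective β) (x y : K) :
    IsSumOfAtMost 2 (qmColumn h β) (0, x, y) := by
  by_cases hx : x = 0
  · subst hx
    by_cases hy : y = 0
    · subst hy
      exact IsSumOfAtMost.zero
    · exact IsSumOfAtMost.apply (f := qmColumn h β) one_le_two (.inr ⟨y, hy⟩)
  · obtain ⟨j, hj⟩ := hβ (y / x)
    convert IsSumOfAtMost.add (f := qmColumn h β) le_rfl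
      (i := .inl (j, 0)) (j := .inl (j, x)) (by simp [Ne.symm hx]) using 1
    simp [qmColumn, ZModModule.add_self, hj, hx]

theorem qmColumn_isSumOfAtMost [Module (ZMod 2) V] {P : Type*} (col : ι → P)
    (hcov : ∀ s : V, ∃ T : Finset ι, T.card ≤ 2 ∧ Set.InjOn col ↑T ∧ s = ∑ j ∈ T, h j)
    (hβsurj : Function.Surjective β) (hβ : ∀ i j, col i ≠ col j → β i ≠ β j)
    (u : V × K × K) : IsSumOfAtMost 2 (qmColumn h β) u := by
  obtain ⟨s, x, y⟩ := u
  obtain ⟨T, hT, hinj, rfl⟩ := hcov s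
  interval_cases hcard : T.card
  · obtain rfl := card_eq_zero.mp hcard
    simpa using qmColumn_isSumOfAtMost_zero h β hβsurj x y
  · obtain ⟨j, rfl⟩ := card_eq_one.mp hcard
    simpa using qmColumn_isSumOfAtMost_column h β j x y
  · classical
    obtain ⟨i, j, hij, rfl⟩ := card_eq_two.mp hcard
    have hcol : col i ≠ col j := fun hc => hij (hinj (by simp) (by simp) hc)
    simpa [sum_pair hij] using qmColumn_isSumOfAtMost_add h β (hβ i j hcol) x y

end QM

theorem QM2_2_construction_general
    (r0 n0 p m : ℕ)
    (K : Type) [Field K] [Fintype K] [DecidableEq K] (hK : Fintype.card K = 2 ^ m)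
    (h : Fin n0 → (Fin r0 → ZMod 2)) (col : Fin n0 → Fin p)
    (hcov : ∀ s : Fin r0 → ZMod 2, ∃ T : Finset (Fin n0),
        T.card ≤ 2 ∧ Set.InjOn col ↑T ∧ s = ∑ j ∈ T, h j)
    (β : Fin n0 → K) (hβsurj : Function.Surjective β)
    (hβ : ∀ i j, col i ≠ col j → β i ≠ β j) :
    Fintype.card ((Fin n0 × K) ⊕ {w : K // w ≠ 0}) = 2 ^ m * (n0 + 1) - 1 ∧
    ∀ u : (Fin r0 → ZMod 2) × K × K,
      ∃ T : Finset ((Fin n0 × K) ⊕ {w : K // w ≠ 0}),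
        T.card ≤ 2 ∧
        u = ∑ i ∈ T, Sum.elim
              (fun jx : Fin n0 × K => (h jx.1, jx.2, β jx.1 * jx.2))
              (fun w : {w : K // w ≠ 0} => ((0 : Fin r0 → ZMod 2), (0 : K), (w : K))) i := by
  refine ⟨?_, qmColumn_isSumOfAtMost h β col hcov hβsurj hβ⟩
  rw [card_qmIndex, hK, Fintype.card_fin]

/-- Construction QM_2^2. From an r₀×n₀ binary matrix H₀ whose
columns h admit a 2-partition (coloring `col` into p parts; every vector of
F_2^{r₀} is a sum of ≤ 2 columns from distinct parts), with 2^m ≥ p,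
indicator set B = F_{2^m} (β surjective, distinct on distinct parts) and
D = D₁(2), the matrix H_C (columns indexed by (Fin n₀ × K) ⊕ {w ≠ 0}) has
r₀ + 2m rows and 2^m(n₀+1) − 1 columns, and every vector of F_2^{r₀+2m}
is a sum of at most 2 of its columns. -/
theorem QM2_2_construction
    (r0 n0 p m : ℕ) (hm : 1 ≤ m)
    (K : Type) [Field K] [Fintype K] [DecidableEq K] (hK : Fintype.card K = 2 ^ m)
    (h : Fin n0 → (Fin r0 → ZMod 2)) (col : Fin n0 → Fin p)
    (hcov : ∀ s : Fin r0 → ZMod 2, ∃ T : Finset (Fin n0),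
        T.card ≤ 2 ∧ Set.InjOn col ↑T ∧ s = ∑ j ∈ T, h j)
    (hpm : p ≤ 2 ^ m) (hn0 : 2 ^ m ≤ n0)
    (β : Fin n0 → K) (hβsurj : Function.Surjective β)
    (hβ : ∀ i j, col i ≠ col j → β i ≠ β j) :
    Fintype.card ((Fin n0 × K) ⊕ {w : K // w ≠ 0}) = 2 ^ m * (n0 + 1) - 1 ∧
    ∀ u : (Fin r0 → ZMod 2) × K × K,
      ∃ T : Finset ((Fin n0 × K) ⊕ {w : K // w ≠ 0}),
        T.card ≤ 2 ∧
        u = ∑ i ∈ T, Sum.elim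
              (fun jx : Fin n0 × K => (h jx.1, jx.2, β jx.1 * jx.2))
              (fun w : {w : K // w ≠ 0} => ((0 : Fin r0 → ZMod 2), (0 : K), (w : K))) i :=
  QM2_2_construction_general r0 n0 p m K hK h col hcov β hβsurj hβ
end
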